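/- Let C be a d-dimensional copula with copula measure Q^C, let T : [0,1]^d → [0,1]^d map each vector to its nondecreasing rearrangement, and let C_T be the copula of the order transform. Then [C_T, C_T] = ∫_{[0,1]^d} Q^C[{v ∈ [0,1]^d : T(v) ≤ T(u)}] dQ^C(u), i.e., [C_T,C_T] equals the probability that T(V) ≤ T(U) coordinatewise for U, V independent with distribution Q^C. -/

import Mathlib

open MeasureTheory

/-- A copula measure: a probability measure on `[0,1]^d` (viewed inside
`Fin d → ℝ`) all of whose univariate marginals are uniform on `[0,1]`. -/
def IsCopulaMeasure {d : ℕ} (μ : Measure (Fin d → ℝ)) : Prop :=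
  IsProbabilityMeasure μ ∧
    ∀ i : Fin d, μ.map (fun x => x i) = volume.restrict (Set.Icc 0 1)

/-- The copula (distribution function) associated with a copula measure. -/
noncomputable def copulaFn {d : ℕ} (μ : Measure (Fin d → ℝ)) (u : Fin d → ℝ) : ℝ :=
  (μ {x | ∀ i, x i ≤ u i}).toReal

/-- The sorting (order statistic) map: `sortVec x` is the nondecreasing
rearrangement of the vector `x`. -/
noncomputable def sortVec {d : ℕ} (x : Fin d → ℝ) : Fin d → ℝ :=
  x ∘ Tuple.sort x

/-- The `i`-th univariate marginal distribution function of a measure on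
`Fin d → ℝ`. -/
noncomputable def margCDF {d : ℕ} (ρ : Measure (Fin d → ℝ)) (i : Fin d) (t : ℝ) : ℝ :=
  (ρ.map (fun x => x i) (Set.Iic t)).toReal

/-- `ν` is the copula measure of the order transform `C_T` of the copula
with copula measure `μ`: Sklar's identity `H^C_T = C_T ∘ (marginals of H^C_T)`
holds, where `H^C_T` is the distribution function of the image of `μ` under
the sorting map. -/
def IsOrderTransform {d : ℕ} (μ ν : Measure (Fin d → ℝ)) : Prop :=
  IsCopulaMeasure ν ∧
    ∀ x : Fin d → ℝ,
      ((μ.map sortVec) {y | ∀ i, y i ≤ x i}).toReal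
        = copulaFn ν (fun i => margCDF (μ.map sortVec) i (x i))

/-! Let `ρ` be the law of the sorted vector `T(U)`, `U ∼ Q^C`, and `F` the vector of its marginal
distribution functions. The marginals of `ρ` are atomless and concentrated on `(0,1]`, so every
level `a ∈ [0,1]` of a marginal cdf has a quantile `s` with `{F_i ≤ a} = {x_i ≤ s}` almost surely.
Combined with Sklar's identity `ρ(Iic x) = C_T(F x)` this shows that `Q^{C_T}` is the image of `ρ`
under `F` (the probability integral transform), hence
`[C_T, C_T] = ∫ C_T(F x) dρ(x) = ∫ ρ(Iic x) dρ(x)`, which is the claim after pulling back along `T`.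
-/

open ProbabilityTheory MeasurableSpace Set Filter Topology

lemma measurableSet_setOf_eq_sort {d : ℕ} (σ : Equiv.Perm (Fin d)) :
    MeasurableSet {x : Fin d → ℝ | σ = Tuple.sort x} := by
  simp only [Tuple.eq_sort_iff, Monotone, Function.comp_apply]
  measurability

lemma measurable_sortVec {d : ℕ} : Measurable (sortVec (d := d)) := by
  refine measurable_pi_lambda _ fun i => ?_
  have : (fun x : Fin d → ℝ => sortVec x i) = fun x => ∑ σ : Equiv.Perm (Fin d),
      {x : Fin d → ℝ | σ = Tuple.sort x}.indicator (fun x => x (σ i)) x := by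
    ext x
    rw [Finset.sum_eq_single (Tuple.sort x) (fun σ _ hσ =>
      indicator_of_notMem (s := {y | σ = Tuple.sort y}) hσ _)
      (absurd (Finset.mem_univ _)),
      indicator_of_mem (s := {y | Tuple.sort x = Tuple.sort y}) rfl]
    rfl
  rw [this]
  exact Finset.measurable_sum _ fun σ _ =>
    (measurable_pi_apply _).indicator (measurableSet_setOf_eq_sort σ)

theorem MeasureTheory.Measure.ext_of_Iic_pi {ι : Type*} [Finite ι] (μ ν : Measure (ι → ℝ))
    [IsFiniteMeasure μ] (h : ∀ a, μ (Iic a) = ν (Iic a)) : μ = ν := by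
  have hgen : generateFrom (pi univ '' pi univ fun _ : ι => range (Iic : ℝ → Set ℝ))
      = MeasurableSpace.pi := by
    refine generateFrom_eq_pi (fun _ => (borel_eq_generateFrom_Iic ℝ).symm.trans
      BorelSpace.measurable_eq.symm) fun _ => ⟨fun n => Iic (n : ℝ), fun n => mem_range_self _,
      iUnion_eq_univ_iff.2 exists_nat_ge⟩
  refine ext_of_generateFrom_of_iUnion _ (fun n => Iic fun _ => (n : ℝ)) hgen.symm
    (IsPiSystem.pi fun _ => isPiSystem_Iic) ?_
    (fun n => ⟨_, fun i _ => ⟨_, rfl⟩, pi_univ_Iic _⟩) (fun _ => measure_ne_top μ _) ?_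
  · exact iUnion_eq_univ_iff.2 fun x =>
      (eventually_all.2 fun i => tendsto_natCast_atTop_atTop.eventually_ge_atTop (x i)).exists
  · rintro _ ⟨s, hs, rfl⟩
    choose a ha using fun i => hs i (mem_univ i)
    rw [show s = fun i => Iic (a i) from funext fun i => (ha i).symm, pi_univ_Iic]
    exact h a

lemma measurable_measure_Iic {ι : Type*} [Finite ι] (κ : Measure (ι → ℝ)) [SFinite κ] :
    Measurable fun a => κ (Iic a) :=
  measurable_measure_prodMk_left (measurableSet_le measurable_snd measurable_fst)

section CDF

variable (m : Measure ℝ) [IsProbabilityMeasure m]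

lemma continuous_cdf [NullSingletonClass m] : Continuous (cdf m) := by
  refine continuous_iff_continuousAt.2 fun x => ?_
  rw [(monotone_cdf m).continuousAt_iff_leftLim_eq_rightLim, StieltjesFunction.rightLim_eq]
  have h := (cdf m).measure_singleton x
  rw [measure_cdf, measure_singleton, eq_comm, ENNReal.ofReal_eq_zero, sub_nonpos] at h
  exact le_antisymm ((monotone_cdf m).leftLim_le le_rfl) h

variable {m}

theorem exists_cdf_eq_and_ae_cdf_le_iff [NullSingletonClass m] {l r a : ℝ}
    (hm : ∀ᵐ t ∂m, t ∈ Ioc l r) (ha : a ∈ Icc 0 1) :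
    ∃ s, cdf m s = a ∧ ∀ᵐ t ∂m, (cdf m t ≤ a ↔ t ≤ s) := by
  have hnull := ae_iff.1 hm
  have hl : cdf m l = 0 := by
    rw [cdf_eq_real, measureReal_def, ENNReal.toReal_eq_zero_iff]
    exact .inl <| measure_mono_null
      (fun t (ht : t ∈ Iic l) (hlr : t ∈ Ioc l r) => not_lt.2 ht hlr.1) hnull
  have hr : cdf m r = 1 := by
    rw [cdf_eq_real, measureReal_def, (prob_compl_eq_zero_iff measurableSet_Iic).1
      (measure_mono_null (fun t (ht : t ∈ (Iic r)ᶜ) (hlr : t ∈ Ioc l r) => ht hlr.2) hnull),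
      ENNReal.toReal_one]
  obtain ⟨t₀, ht₀⟩ := hm.exists
  -- `s` is the last point of `[l, r]` where the cdf is at most `a`; continuity pins `cdf m s = a`.
  set S := Icc l r ∩ cdf m ⁻¹' Iic a
  have hlS : l ∈ S := ⟨⟨le_rfl, ht₀.1.le.trans ht₀.2⟩, by simp [hl, ha.1]⟩
  have hbdd : BddAbove S := ⟨r, fun t ht => ht.1.2⟩
  have hsS : sSup S ∈ S :=
    (isClosed_Icc.inter (isClosed_Iic.preimage (continuous_cdf m))).csSup_mem ⟨l, hlS⟩ hbdd
  set s := sSup S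
  have hle : ∀ t ∈ Icc l r, cdf m t ≤ a ↔ t ≤ s := fun t ht =>
    ⟨fun h => le_csSup hbdd ⟨ht, h⟩, fun h => (monotone_cdf m h).trans hsS.2⟩
  have hge : a ≤ cdf m s := by
    rcases hsS.1.2.eq_or_lt with hsr | hsr
    · rw [hsr, hr]; exact ha.2
    · have : ∀ᶠ t in 𝓝[>] s, a ≤ cdf m t := by
        filter_upwards [Ioo_mem_nhdsGT hsr] with t ht
        by_contra! h
        exact (not_le.2 ht.1) (le_csSup hbdd ⟨⟨hsS.1.1.trans ht.1.le, ht.2.le⟩, h.le⟩)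
      exact ge_of_tendsto
        ((continuous_cdf m).continuousAt.tendsto.mono_left nhdsWithin_le_nhds) this
  refine ⟨s, le_antisymm hsS.2 hge, ?_⟩
  filter_upwards [hm] with t ht using hle t (Ioc_subset_Icc_self ht)

lemma ae_pos_cdf [NullSingletonClass m] {l r : ℝ}
    (hm : ∀ᵐ t ∂m, t ∈ Ioc l r) : ∀ᵐ t ∂m, 0 < cdf m t := by
  obtain ⟨s, hs, hiff⟩ := exists_cdf_eq_and_ae_cdf_le_iff hm ⟨le_rfl, zero_le_one⟩
  have hgt : ∀ᵐ t ∂m, s < t := by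
    rw [ae_iff]
    simp only [not_lt]
    change m (Iic s) = 0
    rw [← ofReal_cdf, hs, ENNReal.ofReal_zero]
  filter_upwards [hiff, hgt] with t h1 h2 using not_le.1 fun h => (not_le.2 h2) (h1.1 h)

end CDF

lemma le_max_zero_min_one_iff {w a : ℝ} (hw : w ∈ Ioc 0 1) :
    w ≤ max 0 (min a 1) ↔ w ≤ a := by
  refine ⟨fun h => ?_, fun h => le_max_of_le_right (le_min h hw.2)⟩
  rcases le_max_iff.1 h with h | h
  · exact absurd h (not_le.2 hw.1)
  · exact h.trans (min_le_left _ _)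

lemma measure_Iic_max_zero_min_one {ι : Type*} (κ : Measure (ι → ℝ))
    (hκ : ∀ᵐ w ∂κ, ∀ i, w i ∈ Ioc 0 1) (a : ι → ℝ) :
    κ (Iic fun i => max 0 (min (a i) 1)) = κ (Iic a) :=
  measure_congr <| eventuallyEq_set.2 <| hκ.mono fun _ hw =>
    forall_congr' fun i => le_max_zero_min_one_iff (hw i)

lemma IsCopulaMeasure.ae_mem_Ioc {d : ℕ} {ν : Measure (Fin d → ℝ)}
    (hν : IsCopulaMeasure ν) :
    ∀ᵐ w ∂ν, ∀ i, w i ∈ Ioc 0 1 := by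
  refine ae_all_iff.2 fun i => ae_of_ae_map (measurable_pi_apply i).aemeasurable ?_
  rw [hν.2 i, Measure.restrict_congr_set Ioc_ae_eq_Icc.symm]
  exact ae_restrict_mem measurableSet_Ioc

lemma IsCopulaMeasure.nullSingletonClass_map {d : ℕ} {ν : Measure (Fin d → ℝ)}
    (hν : IsCopulaMeasure ν) (i : Fin d) : NullSingletonClass (ν.map fun x => x i) := by
  rw [hν.2 i]
  infer_instance

lemma nullSingletonClass_map_sortVec_apply {d : ℕ} (μ : Measure (Fin d → ℝ))
    [∀ j, NullSingletonClass (μ.map fun x => x j)] (i : Fin d) :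
    NullSingletonClass ((μ.map sortVec).map fun x => x i) := by
  refine ⟨fun t => ?_⟩
  rw [Measure.map_map (measurable_pi_apply i) measurable_sortVec, Measure.map_apply
    (measurable_pi_apply i |>.comp measurable_sortVec) (measurableSet_singleton t)]
  refine measure_mono_null (t := ⋃ j, (fun x : Fin d → ℝ => x j) ⁻¹' {t})
    (fun x hx => mem_iUnion.2 ⟨Tuple.sort x i, hx⟩)
    (measure_iUnion_null fun j => ?_)
  rw [← Measure.map_apply (measurable_pi_apply j) (measurableSet_singleton t)]
  exact measure_singleton t

lemma ae_map_sortVec_apply_mem {d : ℕ} {μ : Measure (Fin d → ℝ)} {S : Set ℝ}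
    (hS : MeasurableSet S) (h : ∀ᵐ x ∂μ, ∀ i, x i ∈ S) (i : Fin d) :
    ∀ᵐ t ∂(μ.map sortVec).map (fun x => x i), t ∈ S := by
  rw [Measure.map_map (measurable_pi_apply i) measurable_sortVec]
  exact (ae_map_iff (measurable_pi_apply i |>.comp measurable_sortVec).aemeasurable hS).2
    (h.mono fun _ hx => hx _)

instance MeasureTheory.Measure.isProbabilityMeasure_map_eval {ι : Type*} {X : ι → Type*}
    [∀ i, MeasurableSpace (X i)] (ρ : Measure (∀ i, X i)) [IsProbabilityMeasure ρ] (i : ι) :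
    IsProbabilityMeasure (ρ.map fun x => x i) :=
  Measure.isProbabilityMeasure_map (measurable_pi_apply i).aemeasurable

section ProbIntegralTransform

variable {d : ℕ}

noncomputable def probIntegralTransform (ρ : Measure (Fin d → ℝ)) (x : Fin d → ℝ) :
    Fin d → ℝ :=
  fun i => margCDF ρ i (x i)

variable (ρ : Measure (Fin d → ℝ)) [IsProbabilityMeasure ρ]

lemma margCDF_eq_cdf (i : Fin d) (t : ℝ) : margCDF ρ i t = cdf (ρ.map fun x => x i) t := by
  rw [cdf_eq_real, measureReal_def]
  rfl

lemma measurable_probIntegralTransform : Measurable (probIntegralTransform ρ) := by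
  refine measurable_pi_lambda _ fun i => ?_
  simp only [probIntegralTransform, margCDF_eq_cdf]
  exact (monotone_cdf _).measurable.comp (measurable_pi_apply i)

variable [∀ i, NullSingletonClass (ρ.map fun x => x i)] {l r : Fin d → ℝ}

lemma ae_map_probIntegralTransform_mem_Ioc
    (hsupp : ∀ i, ∀ᵐ t ∂ρ.map (fun x => x i), t ∈ Ioc (l i) (r i)) :
    ∀ᵐ y ∂ρ.map (probIntegralTransform ρ), ∀ i, y i ∈ Ioc 0 1 := by
  refine ae_all_iff.2 fun i => (ae_map_iff (measurable_probIntegralTransform ρ).aemeasurable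
    (measurable_pi_apply i measurableSet_Ioc)).2 ?_
  filter_upwards [ae_of_ae_map (measurable_pi_apply i).aemeasurable (ae_pos_cdf (hsupp i))]
    with x hx
  simp only [probIntegralTransform, margCDF_eq_cdf]
  exact ⟨hx, cdf_le_one _ _⟩

variable {ν : Measure (Fin d → ℝ)}

lemma map_probIntegralTransform_Iic [IsFiniteMeasure ν]
    (hsupp : ∀ i, ∀ᵐ t ∂ρ.map (fun x => x i), t ∈ Ioc (l i) (r i))
    (hsklar : ∀ x, (ρ (Iic x)).toReal = copulaFn ν (probIntegralTransform ρ x))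
    {a : Fin d → ℝ} (ha : ∀ i, a i ∈ Icc 0 1) :
    ρ.map (probIntegralTransform ρ) (Iic a) = ν (Iic a) := by
  choose s hs hiff using fun i => exists_cdf_eq_and_ae_cdf_le_iff (hsupp i) (ha i)
  have hpre : probIntegralTransform ρ ⁻¹' Iic a =ᵐ[ρ] Iic s := by
    refine eventuallyEq_set.2 ((ae_all_iff.2 fun i =>
      ae_of_ae_map (measurable_pi_apply i).aemeasurable (hiff i)).mono fun x hx => ?_)
    simp only [mem_preimage, mem_Iic, Pi.le_def, probIntegralTransform, margCDF_eq_cdf]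
    exact forall_congr' hx
  have hFs : probIntegralTransform ρ s = a :=
    funext fun i => (margCDF_eq_cdf ρ i _).trans (hs i)
  have h := hsklar s
  rw [hFs] at h
  rw [Measure.map_apply (measurable_probIntegralTransform ρ) measurableSet_Iic, measure_congr hpre]
  exact (ENNReal.toReal_eq_toReal_iff' (measure_ne_top _ _) (measure_ne_top _ _)).1 h

theorem map_probIntegralTransform_eq
    (hsupp : ∀ i, ∀ᵐ t ∂ρ.map (fun x => x i), t ∈ Ioc (l i) (r i))
    (hsklar : ∀ x, (ρ (Iic x)).toReal = copulaFn ν (probIntegralTransform ρ x))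
    (hν : IsCopulaMeasure ν) :
    ρ.map (probIntegralTransform ρ) = ν := by
  have := hν.1
  have : IsProbabilityMeasure (ρ.map (probIntegralTransform ρ)) :=
    Measure.isProbabilityMeasure_map (measurable_probIntegralTransform ρ).aemeasurable
  -- Both measures live on `(0,1]^d`, so only boxes with corners in `[0,1]^d` need comparing.
  refine Measure.ext_of_Iic_pi _ _ fun a => ?_
  rw [← measure_Iic_max_zero_min_one _ (ae_map_probIntegralTransform_mem_Ioc ρ hsupp),
    ← measure_Iic_max_zero_min_one _ hν.ae_mem_Ioc]
  exact map_probIntegralTransform_Iic ρ hsupp hsklar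
    fun i => ⟨le_max_left _ _, max_le zero_le_one (min_le_right _ _)⟩

end ProbIntegralTransform

theorem stmt11_general (d : ℕ) (μ ν : Measure (Fin d → ℝ))
    (hμ : IsCopulaMeasure μ) (hν : IsOrderTransform μ ν) :
    ∫ u, copulaFn ν u ∂ν
      = ∫ u, (μ {v | ∀ i, sortVec v i ≤ sortVec u i}).toReal ∂μ := by
  have := hμ.1
  have := hν.1.1
  have := hμ.nullSingletonClass_map
  have := nullSingletonClass_map_sortVec_apply μ
  set ρ := μ.map sortVec
  have : IsProbabilityMeasure ρ := Measure.isProbabilityMeasure_map measurable_sortVec.aemeasurable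
  have hmap : ρ.map (probIntegralTransform ρ) = ν := map_probIntegralTransform_eq ρ
    (l := 0) (r := 1) (ae_map_sortVec_apply_mem measurableSet_Ioc hμ.ae_mem_Ioc)
    hν.2 hν.1
  calc ∫ u, copulaFn ν u ∂ν
      = ∫ u, copulaFn ν u ∂ρ.map (probIntegralTransform ρ) := by rw [hmap]
    _ = ∫ x, copulaFn ν (probIntegralTransform ρ x) ∂ρ :=
        integral_map (measurable_probIntegralTransform ρ).aemeasurable
          (measurable_measure_Iic ν).ennreal_toReal.aestronglyMeasurable
    _ = ∫ x, (ρ (Iic x)).toReal ∂ρ := integral_congr_ae (ae_of_all _ fun x => (hν.2 x).symm)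
    _ = ∫ u, (ρ (Iic (sortVec u))).toReal ∂μ := integral_map measurable_sortVec.aemeasurable
          (measurable_measure_Iic ρ).ennreal_toReal.aestronglyMeasurable
    _ = _ := by simp only [ρ, Measure.map_apply measurable_sortVec measurableSet_Iic]; rfl

theorem stmt11 (d : ℕ) (hd : 2 ≤ d) (μ ν : Measure (Fin d → ℝ))
    (hμ : IsCopulaMeasure μ) (hν : IsOrderTransform μ ν) :
    ∫ u, copulaFn ν u ∂ν
      = ∫ u, (μ {v | ∀ i, sortVec v i ≤ sortVec u i}).toReal ∂μ :=
  stmt11_general d μ ν hμ hν
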